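/- arXiv:1701.04486 — 3 statements merged into one kernel-verified Lean document; each statement's English description precedes it below -/
import Mathlib

section
/- The Möbius map G_n(x) = (1+(n-1)x)/(1+nx) maps the closed disc {ξ ∈ ℂ : |ξ - 1| ≤ 3/4} into the closed disc {ξ ∈ ℂ : |ξ - 1| ≤ 2/3}, for every positive integer n. -/
/-!
On the disc `‖ξ - 1‖ ≤ 1` one has `‖ξ‖² ≤ 2 Re ξ`, i.e. `Re (1/ξ) ≥ 1/2`: inversion sends this
disc into the half-plane `Re w ≥ 1/2`. Since `G_n(ξ) - 1 = -ξ / (1 + nξ) = -1 / (n + 1/ξ)`, this gives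
`‖G_n(ξ) - 1‖ ≤ 1 / (n + 1/2) ≤ 2/3`. Cleared of denominators the estimate reads
`(n + 1/2) ‖ξ‖ ≤ ‖1 + nξ‖`, which also holds at `ξ = 0`.
-/

namespace Complex

theorem normSq_le_two_mul_re_of_norm_sub_one_le_one {z : ℂ} (hz : ‖z - 1‖ ≤ 1) :
    normSq z ≤ 2 * z.re := by
  have h : normSq (z - 1) ≤ 1 := by
    rw [← Complex.sq_norm]
    exact pow_le_one₀ (norm_nonneg _) hz
  rw [normSq_sub, normSq_one, map_one, mul_one] at h
  linarith

theorem one_le_re_one_add_ofReal_mul {z : ℂ} (hz : ‖z - 1‖ ≤ 1) {t : ℝ} (ht : 0 ≤ t) :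
    1 ≤ (1 + t * z).re := by
  have hre : 0 ≤ z.re := by
    linarith [normSq_nonneg z, normSq_le_two_mul_re_of_norm_sub_one_le_one hz]
  simpa using mul_nonneg ht hre

theorem norm_div_one_add_ofReal_mul_le {z : ℂ} (hz : ‖z - 1‖ ≤ 1) {t : ℝ} (ht : 0 ≤ t) :
    ‖z / (1 + t * z)‖ ≤ 2 / (2 * t + 1) := by
  have hD : 0 < ‖1 + t * z‖ :=
    zero_lt_one.trans_le ((one_le_re_one_add_ofReal_mul hz ht).trans (re_le_norm _))
  have hre := normSq_le_two_mul_re_of_norm_sub_one_le_one hz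
  have hre_le_two : z.re ≤ 2 := by linarith [re_le_norm (z - 1), sub_re z 1, one_re]
  -- `‖z‖² ≤ 2 Re z` is used once with weight `t` and once through `‖z‖² ≤ 4`.
  have hsq : ((t + 1 / 2) * ‖z‖) ^ 2 ≤ ‖1 + t * z‖ ^ 2 := by
    have hexp : normSq (1 + t * z) = 1 + 2 * t * z.re + t ^ 2 * normSq z := by
      simp only [normSq_apply, add_re, add_im, mul_re, mul_im, ofReal_re, ofReal_im, one_re,
        one_im]
      ring
    rw [mul_pow, Complex.sq_norm, Complex.sq_norm, hexp]
    nlinarith [mul_le_mul_of_nonneg_left hre ht]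
  have hle : (t + 1 / 2) * ‖z‖ ≤ ‖1 + t * z‖ := abs_le_of_sq_le_sq' hsq hD.le |>.2
  rw [norm_div, div_le_div_iff₀ hD (by linarith)]
  linarith

end Complex

/-- For every positive integer `n`, the Möbius map `G_n(ξ) = (1+(n-1)ξ)/(1+nξ)`
maps the closed disc `{ξ : |ξ-1| ≤ 3/4}` into the closed disc `{ξ : |ξ-1| ≤ 2/3}`. -/
theorem mobius_maps_disc_into_disc (n : ℕ) (hn : 0 < n) (ξ : ℂ)
    (hξ : ‖ξ - 1‖ ≤ 3 / 4) :
    ‖(1 + ((n : ℂ) - 1) * ξ) / (1 + (n : ℂ) * ξ) - 1‖ ≤ 2 / 3 := by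
  have hξ₁ : ‖ξ - 1‖ ≤ 1 := hξ.trans (by norm_num)
  have hn₀ : (0 : ℝ) ≤ n := n.cast_nonneg
  have hD : 1 + (n : ℂ) * ξ ≠ 0 := fun h => by
    have := Complex.one_le_re_one_add_ofReal_mul hξ₁ hn₀
    norm_num [h] at this
  have hG : (1 + ((n : ℂ) - 1) * ξ) / (1 + (n : ℂ) * ξ) - 1 = -(ξ / (1 + (n : ℂ) * ξ)) := by
    field_simp
    ring
  have hn₁ : (1 : ℝ) ≤ n := by exact_mod_cast hn
  rw [hG, norm_neg]
  calc ‖ξ / (1 + (n : ℂ) * ξ)‖ ≤ 2 / (2 * n + 1) := by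
        simpa using Complex.norm_div_one_add_ofReal_mul_le hξ₁ hn₀
    _ ≤ 2 / 3 := div_le_div_of_nonneg_left zero_le_two (by norm_num) (by linarith)
end

section
/- Let μ_0 be a purely periodic continued fraction value with period m, with complete quotients μ_k = [i_k; i_{k+1}, ...] satisfying μ_k = i_k + 1/μ_{k+1} and μ_m = μ_0. Then the orbit product μ_0 · μ_1 · ⋯ · μ_{m-1} equals B_{m-1}·μ_0 + B_{m-2}, where B_k are the continued fraction denominators of μ_0. -/
/-- Orbit product formula for a purely periodic continued fraction: with complete
quotients `μ k` (`μ k = i k + 1/μ (k+1)`, `μ m = μ 0`, `μ k > 1`) and `B k` the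
(index-shifted) continued fraction denominators of `μ 0` (`B 0 = B_{-1} = 0`,
`B 1 = B_0 = 1`, `B (k+2) = i (k+1) * B (k+1) + B k`),
the orbit product `μ_0 ⋯ μ_{m-1}` equals `B_{m-1} μ_0 + B_{m-2}`. -/
theorem orbit_product_eq (m : ℕ) (hm : 1 ≤ m) (i : ℕ → ℤ)
    (hi : ∀ k, 1 ≤ i k) (μ : ℕ → ℝ) (hμ : ∀ k, 1 < μ k)
    (hrec : ∀ k : ℕ, μ k = (i k : ℝ) + 1 / μ (k + 1)) (hper : μ m = μ 0)
    (B : ℕ → ℤ) (hB0 : B 0 = 0) (hB1 : B 1 = 1)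
    (hBrec : ∀ k : ℕ, B (k + 2) = i (k + 1) * B (k + 1) + B k) :
    ∏ k ∈ Finset.range m, μ k = (B m : ℝ) * μ 0 + (B (m - 1) : ℝ) := by
  have hμne : ∀ k, μ k ≠ 0 := fun k => (zero_lt_one.trans (hμ k)).ne'
  have key : ∀ n : ℕ, ∏ k ∈ Finset.range (n + 1), μ (k + 1)
      = (B (n + 1) : ℝ) * μ (n + 1) + (B n : ℝ) := by
    intro n
    induction n with
    | zero => simp [hB1, hB0]
    | succ n ih =>
      rw [Finset.prod_range_succ, ih, hBrec n]
      have h1 : μ (n + 1) = (i (n + 1) : ℝ) + 1 / μ (n + 2) := hrec (n + 1)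
      have h2 : μ (n + 2) ≠ 0 := hμne (n + 2)
      rw [h1]
      push_cast
      field_simp
      ring
  obtain ⟨n, rfl⟩ : ∃ n, m = n + 1 := ⟨m - 1, (Nat.succ_pred_eq_of_pos hm).symm⟩
  have hshift : (∏ k ∈ Finset.range (n + 1), μ (k + 1)) * μ 0
      = (∏ k ∈ Finset.range (n + 1), μ k) * μ (n + 1) := by
    rw [← Finset.prod_range_succ μ (n + 1), Finset.prod_range_succ' μ (n + 1)]
  have := key n
  rw [hper] at this
  simp only [Nat.add_sub_cancel]
  have hcancel : ∏ k ∈ Finset.range (n + 1), μ (k + 1)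
      = ∏ k ∈ Finset.range (n + 1), μ k := by
    have := hshift
    rw [hper] at this
    exact mul_right_cancel₀ (hμne 0) this
  rw [← hcancel, this]
end

section
/- For a purely periodic continued fraction μ_0 = [i_0; i_1, ..., i_{m-1}, i_0, i_1, ...] with convergent numerators A_k and denominators B_k, the orbit product ∏_{k=0}^{m-1} μ_k equals ((A_{m-1} + B_{m-2}) + √((A_{m-1} + B_{m-2})^2 + 4(-1)^{m-1}))/2. -/
/-- Closed form for the orbit product of a purely periodic continued fraction:
with complete quotients `μ k` (`μ k = i k + 1/μ (k+1)`, `μ m = μ 0`, `μ k > 1`) and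
`A k`, `B k` the (index-shifted) convergent numerators and denominators of `μ 0`
(`A 0 = A_{-1} = 1`, `A 1 = A_0 = i 0`, `B 0 = B_{-1} = 0`, `B 1 = B_0 = 1`),
`∏_{k=0}^{m-1} μ_k = ((A_{m-1}+B_{m-2}) + √((A_{m-1}+B_{m-2})² + 4(-1)^{m-1}))/2`. -/
theorem orbit_product_closed_form (m : ℕ) (hm : 1 ≤ m) (i : ℕ → ℤ)
    (hi : ∀ k, 1 ≤ i k) (μ : ℕ → ℝ) (hμ : ∀ k, 1 < μ k)
    (hrec : ∀ k : ℕ, μ k = (i k : ℝ) + 1 / μ (k + 1)) (hper : μ m = μ 0)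
    (A B : ℕ → ℤ)
    (hA0 : A 0 = 1) (hA1 : A 1 = i 0)
    (hArec : ∀ k : ℕ, A (k + 2) = i (k + 1) * A (k + 1) + A k)
    (hB0 : B 0 = 0) (hB1 : B 1 = 1)
    (hBrec : ∀ k : ℕ, B (k + 2) = i (k + 1) * B (k + 1) + B k) :
    ∏ k ∈ Finset.range m, μ k
      = (((A m : ℝ) + (B (m - 1) : ℝ))
          + Real.sqrt (((A m : ℝ) + (B (m - 1) : ℝ)) ^ 2 + 4 * (-1 : ℝ) ^ (m - 1)))
        / 2 := by
  have μpos : ∀ k, 0 < μ k := fun k => lt_trans one_pos (hμ k)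
  have μne : ∀ k, μ k ≠ 0 := fun k => ne_of_gt (μpos k)
  -- key recursion for x n := B n * μ 0 - A n
  have R : ∀ n : ℕ, μ (n+1) * ((B (n+1) : ℝ) * μ 0 - (A (n+1) : ℝ))
      = -((B n : ℝ) * μ 0 - (A n : ℝ)) := by
    intro n
    induction n with
    | zero =>
      have h0 : μ 0 * μ 1 = (i 0 : ℝ) * μ 1 + 1 := by
        rw [hrec 0]; field_simp [μne 1]
      rw [hB1, hA1, hB0, hA0]
      push_cast
      linear_combination h0
    | succ n ih =>
      have h1 : μ (n+1) * μ (n+2) = (i (n+1) : ℝ) * μ (n+2) + 1 := by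
        rw [hrec (n+1)]; field_simp [μne (n+2)]
      rw [hBrec n, hArec n]
      push_cast
      linear_combination μ (n+2) * ih
        - ((B (n+1) : ℝ) * μ 0 - (A (n+1) : ℝ)) * h1
  -- orbit product identity
  have C : ∀ n : ℕ, (∏ k ∈ Finset.range n, μ k) * ((B n : ℝ) * μ 0 - (A n : ℝ)) * μ n
      = (-1 : ℝ) ^ (n+1) * μ 0 := by
    intro n
    induction n with
    | zero => simp [hB0, hA0]
    | succ n ih =>
      rw [Finset.prod_range_succ]
      have hRn := R n
      calc (∏ k ∈ Finset.range n, μ k) * μ n * ((B (n+1) : ℝ) * μ 0 - (A (n+1) : ℝ)) * μ (n+1)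
          = (∏ k ∈ Finset.range n, μ k) * μ n *
              (μ (n+1) * ((B (n+1) : ℝ) * μ 0 - (A (n+1) : ℝ))) := by ring
        _ = (∏ k ∈ Finset.range n, μ k) * μ n * (-((B n : ℝ) * μ 0 - (A n : ℝ))) := by rw [hRn]
        _ = -((∏ k ∈ Finset.range n, μ k) * ((B n : ℝ) * μ 0 - (A n : ℝ)) * μ n) := by ring
        _ = (-1 : ℝ) ^ (n+2) * μ 0 := by rw [ih]; ring
  -- determinant identity
  have D : ∀ n : ℕ, A (n+1) * B n - A n * B (n+1) = (-1 : ℤ) ^ (n+1) := by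
    intro n
    induction n with
    | zero => simp [hA0, hA1, hB0, hB1]
    | succ n ih =>
      rw [hArec n, hBrec n]
      ring_nf
      ring_nf at ih
      linear_combination -ih
  obtain ⟨l, rfl⟩ : ∃ l, m = l + 1 := ⟨m - 1, (Nat.succ_pred_eq_of_pos hm).symm⟩
  simp only [Nat.add_sub_cancel]
  set P : ℝ := ∏ k ∈ Finset.range (l+1), μ k with hPdef
  set x : ℝ := (B (l+1) : ℝ) * μ 0 - (A (l+1) : ℝ) with hxdef
  have hP1 : 1 < P := by
    rw [hPdef]
    calc (1:ℝ) = ∏ _k ∈ Finset.range (l+1), (1:ℝ) := by simp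
      _ < ∏ k ∈ Finset.range (l+1), μ k :=
          Finset.prod_lt_prod_of_nonempty (by simp) (fun k _ => hμ k)
            ⟨0, Finset.mem_range.2 (Nat.succ_pos l)⟩
  have hPx : P * x = (-1 : ℝ) ^ l := by
    have hC := C (l+1)
    rw [hper] at hC
    have h2 : P * x * μ 0 = (-1 : ℝ) ^ l * μ 0 := by
      rw [hC]; congr 1
      rw [pow_add]; ring
    exact mul_right_cancel₀ (μne 0) h2
  -- quadratic equation for μ 0
  have hQ : μ 0 * x = -((B l : ℝ) * μ 0 - (A l : ℝ)) := by
    have := R l; rwa [hper] at this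
  have hD : ((A (l+1) : ℝ) * (B l : ℝ) - (A l : ℝ) * (B (l+1) : ℝ)) = (-1 : ℝ) ^ (l+1) := by
    exact_mod_cast D l
  have hx0 : x ≠ 0 := by
    intro h
    rw [h, mul_zero] at hPx
    have : ((-1 : ℝ) ^ l) ^ 2 = 1 := by
      rcases Nat.even_or_odd l with he | ho
      · rw [he.neg_one_pow]; norm_num
      · rw [ho.neg_one_pow]; norm_num
    rw [← hPx] at this; norm_num at this
  have hPform : P = (B (l+1) : ℝ) * μ 0 + (B l : ℝ) := by
    have key : ((B (l+1) : ℝ) * μ 0 + (B l : ℝ)) * x = (-1 : ℝ) ^ l := by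
      have e1 : (-1 : ℝ) ^ (l+1) = -(-1 : ℝ) ^ l := by rw [pow_succ]; ring
      rw [hxdef]
      linear_combination (B (l+1) : ℝ) * hQ - hD + e1
    have : P * x = ((B (l+1) : ℝ) * μ 0 + (B l : ℝ)) * x := by rw [hPx, key]
    exact mul_right_cancel₀ hx0 this
  set t : ℝ := (A (l+1) : ℝ) + (B l : ℝ) with htdef
  have hPt : P - t = x := by rw [hPform, htdef, hxdef]; ring
  have hquad : P ^ 2 - t * P = (-1 : ℝ) ^ l := by
    have : P * (P - t) = (-1 : ℝ) ^ l := by rw [hPt]; exact hPx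
    linear_combination this
  have h2Pt : 0 < 2 * P - t := by
    have hx : x = P - t := hPt.symm
    rcases Nat.even_or_odd l with he | ho
    · rw [he.neg_one_pow] at hPx
      nlinarith [hPx, hP1]
    · rw [ho.neg_one_pow] at hPx
      nlinarith [hPx, hP1]
  have hsq : t ^ 2 + 4 * (-1 : ℝ) ^ l = (2 * P - t) ^ 2 := by
    linear_combination (-4 : ℝ) * hquad
  rw [hsq, Real.sqrt_sq (le_of_lt h2Pt)]
  ring
end
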